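/- arXiv:1709.06616 — 5 statements merged into one kernel-verified Lean document; each statement's English description precedes it below -/
import Mathlib

section
/- Let Φ ∈ ℝ^{M×N} be such that ΦΦᵀ is positive definite, and let 0 < π_min ≤ π_max be reals with π_min·‖y‖₂ ≤ ‖Φᵀy‖₂ ≤ π_max·‖y‖₂ for all y ∈ ℝ^M. Let Ψ ∈ ℝ^{N×L}, κ ∈ ℕ, δ ∈ (0,1), and suppose that for every s ∈ ℝ^L with at most κ nonzero entries, √(1−δ)·‖Ψs‖₂ ≤ ‖ΦΨs‖₂ ≤ √(1+δ)·‖Ψs‖₂. Define Φ̄ := (ΦΦᵀ)^{-1/2}Φ, where (ΦΦᵀ)^{-1/2} is the inverse of the unique symmetric positive definite square root of ΦΦᵀ. Then for every s ∈ ℝ^L with at most κ nonzero entries, (√(1−δ)/π_max)·‖Ψs‖₂ ≤ ‖Φ̄Ψs‖₂ ≤ (√(1+δ)/π_min)·‖Ψs‖₂. -/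
open Matrix

/-- The Euclidean (ℓ₂) norm of a vector in `ℝ^n`. -/
noncomputable def l2norm {n : ℕ} (v : Fin n → ℝ) : ℝ := Real.sqrt (∑ i, v i ^ 2)

/-- The number of nonzero entries (ℓ₀ "norm") of a vector. -/
noncomputable def l0norm {n : ℕ} (v : Fin n → ℝ) : ℕ :=
  (Finset.univ.filter fun i => v i ≠ 0).card

/-!
Since `RᵀR = ΦΦᵀ`, the maps `R` and `Φᵀ` have the same Gram matrix, hence
`‖Φᵀ R⁻¹ z‖ = ‖R R⁻¹ z‖ = ‖z‖`. The singular value bounds on `Φᵀ` then give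
`‖z‖/π_max ≤ ‖R⁻¹z‖ ≤ ‖z‖/π_min`, and taking `z = ΦΨs` the RIP of `Φ` finishes.
-/

lemma l2norm_eq_sqrt_dotProduct {n : ℕ} (v : Fin n → ℝ) : l2norm v = Real.sqrt (v ⬝ᵥ v) := by
  simp [l2norm, dotProduct, pow_two]

lemma dotProduct_mulVec_self {m n : ℕ} (A : Matrix (Fin m) (Fin n) ℝ) (v : Fin n → ℝ) :
    A *ᵥ v ⬝ᵥ A *ᵥ v = v ⬝ᵥ (Aᵀ * A) *ᵥ v := by
  rw [← mulVec_mulVec, dotProduct_mulVec v, vecMul_transpose]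

lemma l2norm_mulVec_eq_of_transpose_mul_self_eq {m k n : ℕ} {A : Matrix (Fin m) (Fin n) ℝ}
    {B : Matrix (Fin k) (Fin n) ℝ} (h : Aᵀ * A = Bᵀ * B) (v : Fin n → ℝ) :
    l2norm (A *ᵥ v) = l2norm (B *ᵥ v) := by
  rw [l2norm_eq_sqrt_dotProduct, l2norm_eq_sqrt_dotProduct, dotProduct_mulVec_self,
    dotProduct_mulVec_self, h]

lemma l2norm_transpose_mulVec_inv_mulVec {m n : ℕ} {Φ : Matrix (Fin m) (Fin n) ℝ}
    {R : Matrix (Fin m) (Fin m) ℝ} (hRsq : Rᵀ * R = Φ * Φᵀ) (hdet : IsUnit R.det)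
    (z : Fin m → ℝ) : l2norm (Φᵀ *ᵥ (R⁻¹ *ᵥ z)) = l2norm z := by
  have hgram : Rᵀ * R = Φᵀᵀ * Φᵀ := by rw [transpose_transpose, hRsq]
  rw [← l2norm_mulVec_eq_of_transpose_mul_self_eq hgram, mulVec_mulVec, mul_nonsing_inv R hdet,
    one_mulVec]

theorem preconditioned_psi_rip_general
    {M N L κ : ℕ} (Φ : Matrix (Fin M) (Fin N) ℝ)
    (πmin πmax : ℝ) (hπmin : 0 < πmin) (hπ : πmin ≤ πmax)
    (hsv : ∀ y : Fin M → ℝ,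
      πmin * l2norm y ≤ l2norm (Φᵀ.mulVec y) ∧ l2norm (Φᵀ.mulVec y) ≤ πmax * l2norm y)
    (Ψ : Matrix (Fin N) (Fin L) ℝ) (δ : ℝ)
    (hΦΨ : ∀ s : Fin L → ℝ, l0norm s ≤ κ →
      Real.sqrt (1 - δ) * l2norm (Ψ.mulVec s) ≤ l2norm ((Φ * Ψ).mulVec s) ∧
      l2norm ((Φ * Ψ).mulVec s) ≤ Real.sqrt (1 + δ) * l2norm (Ψ.mulVec s))
    (R : Matrix (Fin M) (Fin M) ℝ) (hR : R.PosDef) (hRsq : R * R = Φ * Φᵀ) :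
    ∀ s : Fin L → ℝ, l0norm s ≤ κ →
      (Real.sqrt (1 - δ) / πmax) * l2norm (Ψ.mulVec s) ≤ l2norm ((R⁻¹ * Φ * Ψ).mulVec s) ∧
      l2norm ((R⁻¹ * Φ * Ψ).mulVec s) ≤ (Real.sqrt (1 + δ) / πmin) * l2norm (Ψ.mulVec s) := by
  intro s hs
  have hgram : Rᵀ * R = Φ * Φᵀ := by rw [show Rᵀ = R from hR.isHermitian, hRsq]
  have hdet : IsUnit R.det := isUnit_iff_ne_zero.mpr hR.det_pos.ne'
  set z := (Φ * Ψ) *ᵥ s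
  have hcomp : (R⁻¹ * Φ * Ψ) *ᵥ s = R⁻¹ *ᵥ z := by rw [Matrix.mul_assoc, ← mulVec_mulVec]
  obtain ⟨hsv_lo, hsv_hi⟩ := hsv (R⁻¹ *ᵥ z)
  rw [l2norm_transpose_mulVec_inv_mulVec hgram hdet] at hsv_lo hsv_hi
  obtain ⟨hrip_lo, hrip_hi⟩ := hΦΨ s hs
  rw [hcomp, div_mul_eq_mul_div, div_mul_eq_mul_div, div_le_iff₀ (hπmin.trans_le hπ),
    le_div_iff₀ hπmin]
  constructor <;> linarith [mul_comm πmin (l2norm (R⁻¹ *ᵥ z)), mul_comm πmax (l2norm (R⁻¹ *ᵥ z))]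

/-- **Equation (3.9) in the proof of Lemma 3.1 (applied with `x = Ψs`).** If `Φ` has full row
rank with singular values between `π_min` and `π_max` and satisfies the `Ψ`-RIP of order `κ`
with constant `δ`, then the preconditioned matrix `Φ̄ = (ΦΦᵀ)^{-1/2}Φ` satisfies
`(√(1−δ)/π_max)‖Ψs‖₂ ≤ ‖Φ̄Ψs‖₂ ≤ (√(1+δ)/π_min)‖Ψs‖₂` for all `κ`-sparse `s`.
Here `(ΦΦᵀ)^{-1/2}` is the inverse of the (unique) symmetric positive definite square root
of `ΦΦᵀ`, i.e. of any positive definite `R` with `R * R = ΦΦᵀ`. -/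
theorem preconditioned_psi_rip
    {M N L κ : ℕ} (Φ : Matrix (Fin M) (Fin N) ℝ) (hPD : (Φ * Φᵀ).PosDef)
    (πmin πmax : ℝ) (hπmin : 0 < πmin) (hπ : πmin ≤ πmax)
    (hsv : ∀ y : Fin M → ℝ,
      πmin * l2norm y ≤ l2norm (Φᵀ.mulVec y) ∧ l2norm (Φᵀ.mulVec y) ≤ πmax * l2norm y)
    (Ψ : Matrix (Fin N) (Fin L) ℝ) (δ : ℝ) (hδ : δ ∈ Set.Ioo (0 : ℝ) 1)
    (hΦΨ : ∀ s : Fin L → ℝ, l0norm s ≤ κ →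
      Real.sqrt (1 - δ) * l2norm (Ψ.mulVec s) ≤ l2norm ((Φ * Ψ).mulVec s) ∧
      l2norm ((Φ * Ψ).mulVec s) ≤ Real.sqrt (1 + δ) * l2norm (Ψ.mulVec s))
    (R : Matrix (Fin M) (Fin M) ℝ) (hR : R.PosDef) (hRsq : R * R = Φ * Φᵀ) :
    ∀ s : Fin L → ℝ, l0norm s ≤ κ →
      (Real.sqrt (1 - δ) / πmax) * l2norm (Ψ.mulVec s) ≤ l2norm ((R⁻¹ * Φ * Ψ).mulVec s) ∧
      l2norm ((R⁻¹ * Φ * Ψ).mulVec s) ≤ (Real.sqrt (1 + δ) / πmin) * l2norm (Ψ.mulVec s) :=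
  preconditioned_psi_rip_general Φ πmin πmax hπmin hπ hsv Ψ δ hΦΨ R hR hRsq
end

section
/- Let Φ ∈ ℝ^{M×N} with ΦΦᵀ positive definite, and 0 < π_min ≤ π_max with π_min·‖y‖₂ ≤ ‖Φᵀy‖₂ ≤ π_max·‖y‖₂ for all y ∈ ℝ^M. Let Ψ ∈ ℝ^{N×L}, κ ∈ ℕ, γ, δ ∈ (0,1), and suppose (i) for every s ∈ ℝ^L with at most κ nonzero entries, √(1−γ)·‖s‖₂ ≤ ‖Ψs‖₂ ≤ √(1+γ)·‖s‖₂, and (ii) for every such s, √(1−δ)·‖Ψs‖₂ ≤ ‖ΦΨs‖₂ ≤ √(1+δ)·‖Ψs‖₂. Define Φ̄ := (ΦΦᵀ)^{-1/2}Φ, where (ΦΦᵀ)^{-1/2} is the inverse of the unique symmetric positive definite square root of ΦΦᵀ, and Ā := Φ̄Ψ. Then for every s ∈ ℝ^L with at most κ nonzero entries, (√((1−δ)(1−γ))/π_max)·‖s‖₂ ≤ ‖Ās‖₂ ≤ (√((1+δ)(1+γ))/π_min)·‖s‖₂. -/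
/-!
Since `R` is symmetric and `R * R = Φ * Φᵀ`, we have `‖R y‖² = yᵀ Φ Φᵀ y = ‖Φᵀ y‖²`, so `R`
stretches every vector by a factor between `π_min` and `π_max`, and hence `R⁻¹` by a factor
between `1 / π_max` and `1 / π_min`. Writing `Ā s = R⁻¹ (Φ Ψ s)`, it remains to chain the RIP of
`Ψ` with the `Ψ`-RIP of `Φ`, which bounds `‖Φ Ψ s‖` by `√((1 ∓ δ)(1 ∓ γ)) ‖s‖`.
-/

open Matrix

lemma l2norm_mulVec_eq_of_transpose_mul_eq {m n k : ℕ} {A : Matrix (Fin m) (Fin n) ℝ}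
    {B : Matrix (Fin k) (Fin n) ℝ} (h : Aᵀ * A = Bᵀ * B) (y : Fin n → ℝ) :
    l2norm (A *ᵥ y) = l2norm (B *ᵥ y) := by
  simp only [l2norm_eq_sqrt_dotProduct, dotProduct_mulVec, ← mulVec_transpose, mulVec_mulVec, h]

lemma l2norm_inv_mulVec_bounds {n : ℕ} {R : Matrix (Fin n) (Fin n) ℝ} (hR : IsUnit R)
    {a b : ℝ} (ha : 0 < a) (hb : 0 < b)
    (hRbounds : ∀ y, a * l2norm y ≤ l2norm (R *ᵥ y) ∧ l2norm (R *ᵥ y) ≤ b * l2norm y)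
    (x : Fin n → ℝ) :
    l2norm x / b ≤ l2norm (R⁻¹ *ᵥ x) ∧ l2norm (R⁻¹ *ᵥ x) ≤ l2norm x / a := by
  have hRinv : R *ᵥ (R⁻¹ *ᵥ x) = x := by
    rw [mulVec_mulVec, mul_nonsing_inv _ ((isUnit_iff_isUnit_det R).1 hR), one_mulVec]
  obtain ⟨hlo, hhi⟩ := hRbounds (R⁻¹ *ᵥ x)
  rw [hRinv] at hlo hhi
  exact ⟨(div_le_iff₀ hb).2 (by linarith), (le_div_iff₀ ha).2 (by linarith)⟩

lemma sqrt_mul_mul_le_of_le_of_le {p q u v w : ℝ} (hp : 0 ≤ p)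
    (huv : Real.sqrt q * u ≤ v) (hvw : Real.sqrt p * v ≤ w) :
    Real.sqrt (p * q) * u ≤ w :=
  calc Real.sqrt (p * q) * u = Real.sqrt p * (Real.sqrt q * u) := by
        rw [Real.sqrt_mul hp, mul_assoc]
    _ ≤ Real.sqrt p * v := mul_le_mul_of_nonneg_left huv (Real.sqrt_nonneg p)
    _ ≤ w := hvw

lemma le_sqrt_mul_mul_of_le_of_le {p q u v w : ℝ} (hp : 0 ≤ p)
    (hvu : v ≤ Real.sqrt q * u) (hwv : w ≤ Real.sqrt p * v) :
    w ≤ Real.sqrt (p * q) * u :=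
  calc w ≤ Real.sqrt p * v := hwv
    _ ≤ Real.sqrt p * (Real.sqrt q * u) := mul_le_mul_of_nonneg_left hvu (Real.sqrt_nonneg p)
    _ = Real.sqrt (p * q) * u := by rw [Real.sqrt_mul hp, mul_assoc]

theorem preconditioned_equivalent_dictionary_rip_general
    {M N L κ : ℕ} (Φ : Matrix (Fin M) (Fin N) ℝ)
    (πmin πmax : ℝ) (hπmin : 0 < πmin) (hπ : πmin ≤ πmax)
    (hsv : ∀ y : Fin M → ℝ,
      πmin * l2norm y ≤ l2norm (Φᵀ.mulVec y) ∧ l2norm (Φᵀ.mulVec y) ≤ πmax * l2norm y)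
    (Ψ : Matrix (Fin N) (Fin L) ℝ) (γ δ : ℝ)
    (hδ : δ ∈ Set.Ioo (0 : ℝ) 1)
    (hΨ : ∀ s : Fin L → ℝ, l0norm s ≤ κ →
      Real.sqrt (1 - γ) * l2norm s ≤ l2norm (Ψ.mulVec s) ∧
      l2norm (Ψ.mulVec s) ≤ Real.sqrt (1 + γ) * l2norm s)
    (hΦΨ : ∀ s : Fin L → ℝ, l0norm s ≤ κ →
      Real.sqrt (1 - δ) * l2norm (Ψ.mulVec s) ≤ l2norm ((Φ * Ψ).mulVec s) ∧
      l2norm ((Φ * Ψ).mulVec s) ≤ Real.sqrt (1 + δ) * l2norm (Ψ.mulVec s))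
    (R : Matrix (Fin M) (Fin M) ℝ) (hR : R.PosDef) (hRsq : R * R = Φ * Φᵀ) :
    ∀ s : Fin L → ℝ, l0norm s ≤ κ →
      (Real.sqrt ((1 - δ) * (1 - γ)) / πmax) * l2norm s ≤
        l2norm ((R⁻¹ * Φ * Ψ).mulVec s) ∧
      l2norm ((R⁻¹ * Φ * Ψ).mulVec s) ≤
        (Real.sqrt ((1 + δ) * (1 + γ)) / πmin) * l2norm s := by
  intro s hs
  have hRΦ : Rᵀ * R = Φᵀᵀ * Φᵀ := by rw [show Rᵀ = R from hR.isHermitian.eq, hRsq, transpose_transpose]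
  have hRsv : ∀ y, πmin * l2norm y ≤ l2norm (R *ᵥ y) ∧ l2norm (R *ᵥ y) ≤ πmax * l2norm y :=
    fun y ↦ l2norm_mulVec_eq_of_transpose_mul_eq hRΦ y ▸ hsv y
  have hπmax : 0 < πmax := hπmin.trans_le hπ
  obtain ⟨hAlo, hAhi⟩ :=
    l2norm_inv_mulVec_bounds hR.isUnit hπmin hπmax hRsv ((Φ * Ψ) *ᵥ s)
  obtain ⟨hΨlo, hΨhi⟩ := hΨ s hs
  obtain ⟨hΦΨlo, hΦΨhi⟩ := hΦΨ s hs
  rw [Matrix.mul_assoc, ← mulVec_mulVec, div_mul_eq_mul_div, div_mul_eq_mul_div]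
  constructor
  · refine le_trans (div_le_div_of_nonneg_right ?_ hπmax.le) hAlo
    exact sqrt_mul_mul_le_of_le_of_le (by linarith [hδ.2]) hΨlo hΦΨlo
  · refine hAhi.trans (div_le_div_of_nonneg_right ?_ hπmin.le)
    exact le_sqrt_mul_mul_of_le_of_le (by linarith [hδ.1]) hΨhi hΦΨhi

/-- **Equation (3.7) of Lemma 3.1.** If `Ψ` satisfies the RIP of order `κ` with constant `γ`,
`Φ` has full row rank with singular values between `π_min` and `π_max` and satisfies the
`Ψ`-RIP of order `κ` with constant `δ`, then the preconditioned equivalent dictionary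
`Ā = (ΦΦᵀ)^{-1/2}ΦΨ` satisfies
`(√((1−δ)(1−γ))/π_max)‖s‖₂ ≤ ‖Ās‖₂ ≤ (√((1+δ)(1+γ))/π_min)‖s‖₂` for all `κ`-sparse `s`.
Here `(ΦΦᵀ)^{-1/2}` is the inverse of the (unique) symmetric positive definite square root of
`ΦΦᵀ`, i.e. of any positive definite `R` with `R * R = ΦΦᵀ`. -/
theorem preconditioned_equivalent_dictionary_rip
    {M N L κ : ℕ} (Φ : Matrix (Fin M) (Fin N) ℝ) (hPD : (Φ * Φᵀ).PosDef)
    (πmin πmax : ℝ) (hπmin : 0 < πmin) (hπ : πmin ≤ πmax)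
    (hsv : ∀ y : Fin M → ℝ,
      πmin * l2norm y ≤ l2norm (Φᵀ.mulVec y) ∧ l2norm (Φᵀ.mulVec y) ≤ πmax * l2norm y)
    (Ψ : Matrix (Fin N) (Fin L) ℝ) (γ δ : ℝ)
    (hγ : γ ∈ Set.Ioo (0 : ℝ) 1) (hδ : δ ∈ Set.Ioo (0 : ℝ) 1)
    (hΨ : ∀ s : Fin L → ℝ, l0norm s ≤ κ →
      Real.sqrt (1 - γ) * l2norm s ≤ l2norm (Ψ.mulVec s) ∧
      l2norm (Ψ.mulVec s) ≤ Real.sqrt (1 + γ) * l2norm s)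
    (hΦΨ : ∀ s : Fin L → ℝ, l0norm s ≤ κ →
      Real.sqrt (1 - δ) * l2norm (Ψ.mulVec s) ≤ l2norm ((Φ * Ψ).mulVec s) ∧
      l2norm ((Φ * Ψ).mulVec s) ≤ Real.sqrt (1 + δ) * l2norm (Ψ.mulVec s))
    (R : Matrix (Fin M) (Fin M) ℝ) (hR : R.PosDef) (hRsq : R * R = Φ * Φᵀ) :
    ∀ s : Fin L → ℝ, l0norm s ≤ κ →
      (Real.sqrt ((1 - δ) * (1 - γ)) / πmax) * l2norm s ≤
        l2norm ((R⁻¹ * Φ * Ψ).mulVec s) ∧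
      l2norm ((R⁻¹ * Φ * Ψ).mulVec s) ≤
        (Real.sqrt ((1 + δ) * (1 + γ)) / πmin) * l2norm s :=
  preconditioned_equivalent_dictionary_rip_general Φ πmin πmax hπmin hπ hsv Ψ γ δ hδ hΨ hΦΨ R hR
    hRsq
end

section
/- Let A ∈ ℝ^{M×L}, y ∈ ℝ^M, and κ ∈ ℕ. Suppose ŝ ∈ ℝ^L has exactly κ nonzero entries and satisfies ‖y − Aŝ‖₂ ≤ ‖y − Az‖₂ for every z ∈ ℝ^L whose support is contained in the support of ŝ. Then ŝ is a local minimizer of s ↦ ‖y − As‖₂² over the set {s ∈ ℝ^L : ‖s‖₀ ≤ κ}: there exists ε > 0 such that ‖y − Aŝ‖₂ ≤ ‖y − As‖₂ for every s with at most κ nonzero entries and ‖s − ŝ‖₂ < ε. -/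
open Matrix

/-!
A vector `s` close enough to `ŝ` keeps every nonzero entry of `ŝ` nonzero, so
`supp ŝ ⊆ supp s`. If `s` is moreover `κ`-sparse, the two supports have the same size and hence
coincide, so `s` is one of the competitors in the optimality hypothesis on `supp ŝ`. Closeness is
measured in the sup norm, which the ℓ₂ norm dominates.
-/

lemma abs_le_l2norm {n : ℕ} (v : Fin n → ℝ) (i : Fin n) : |v i| ≤ l2norm v := by
  rw [l2norm, ← Real.sqrt_sq_eq_abs]
  exact Real.sqrt_le_sqrt <|
    Finset.single_le_sum (f := fun j => v j ^ 2) (fun j _ => sq_nonneg _) (Finset.mem_univ i)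

lemma norm_le_l2norm {n : ℕ} (v : Fin n → ℝ) : ‖v‖ ≤ l2norm v :=
  (pi_norm_le_iff_of_nonneg (Real.sqrt_nonneg _)).2 fun i =>
    (Real.norm_eq_abs (v i)).trans_le (abs_le_l2norm v i)

lemma eventually_nhds_ne_zero_of_ne_zero {ι X : Type*} [Finite ι] [TopologicalSpace X]
    [T1Space X] [Zero X] (v : ι → X) : ∀ᶠ s in nhds v, ∀ i, v i ≠ 0 → s i ≠ 0 := by
  refine Filter.eventually_all.2 fun i => ?_
  by_cases hi : v i = 0
  · exact .of_forall fun _ h => absurd hi h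
  · exact ((continuous_apply i).continuousAt.eventually_ne hi).mono fun _ hs _ => hs

lemma ne_zero_of_ne_zero_of_l0norm_le {n : ℕ} {v s : Fin n → ℝ}
    (hsupp : ∀ i, v i ≠ 0 → s i ≠ 0) (hcard : l0norm s ≤ l0norm v) (i : Fin n) (hi : s i ≠ 0) :
    v i ≠ 0 := by
  have hsub : (Finset.univ.filter fun i => v i ≠ 0) ⊆ Finset.univ.filter fun i => s i ≠ 0 :=
    fun j => by simpa using hsupp j
  have heq := Finset.eq_of_subset_of_card_le hsub hcard
  simpa using heq.ge (Finset.mem_filter.2 ⟨Finset.mem_univ i, hi⟩)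

/-- **First case in the proof of Lemma 5.1.** If `ŝ` has exactly `κ` nonzero entries and
minimizes the residual `‖y − Az‖₂` over all `z` supported on the support of `ŝ`, then `ŝ` is
a local minimizer of `s ↦ ‖y − As‖₂²` over the set of `κ`-sparse vectors. -/
theorem omp_output_local_minimizer
    {M L κ : ℕ} (A : Matrix (Fin M) (Fin L) ℝ) (y : Fin M → ℝ)
    (shat : Fin L → ℝ) (hcard : l0norm shat = κ)
    (hopt : ∀ z : Fin L → ℝ, (∀ i, z i ≠ 0 → shat i ≠ 0) →
      l2norm (y - A.mulVec shat) ≤ l2norm (y - A.mulVec z)) :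
    ∃ ε > 0, ∀ s : Fin L → ℝ, l0norm s ≤ κ → l2norm (s - shat) < ε →
      l2norm (y - A.mulVec shat) ≤ l2norm (y - A.mulVec s) := by
  obtain ⟨ε, hε, hnear⟩ := Metric.eventually_nhds_iff.1 (eventually_nhds_ne_zero_of_ne_zero shat)
  refine ⟨ε, hε, fun s hs hclose => hopt s ?_⟩
  have hsupp : ∀ i, shat i ≠ 0 → s i ≠ 0 :=
    hnear <| (dist_eq_norm s shat).trans_le (norm_le_l2norm _) |>.trans_lt hclose
  exact ne_zero_of_ne_zero_of_l0norm_le hsupp (hcard ▸ hs)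
end

section
/- Let N ≥ 1, σ ∈ ℝ^N, d̄ ∈ ℝ^N, and define g(λ) := ∑_{n=1}^N d̄_n²/(σ_n − λ)² and ξ̃(λ) := ∑_{n=1}^N d̄_n²/(λ − σ_n) + λ, for λ ∉ {σ₁, …, σ_N}. If λ and λ' are two reals with λ > λ', λ, λ' ∉ {σ₁, …, σ_N}, and g(λ) = g(λ') = 1, then ξ̃(λ') ≤ ξ̃(λ). In particular, among the solutions of g(λ) = 1, the value of ξ̃ is monotone in λ. -/
/-!
With `uₙ = d̄ₙ/(λ - σₙ)` and `vₙ = d̄ₙ/(λ' - σₙ)`, the constraints `g(λ) = g(λ') = 1` say that `u`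
and `v` are unit vectors, and the difference of objectives factors as
`ξ̃(λ) - ξ̃(λ') = (λ - λ') (1 - ⟨u, v⟩)`. Cauchy–Schwarz gives `⟨u, v⟩ ≤ 1`.
-/

open Finset

variable {ι : Type*} (s : Finset ι) (d σ : ι → ℝ)

lemma sum_sq_div_sq_sub_eq_sum_sq (x : ℝ) :
    ∑ n ∈ s, d n ^ 2 / (σ n - x) ^ 2 = ∑ n ∈ s, (d n / (x - σ n)) ^ 2 := by
  simp only [div_pow, sub_sq_comm]

lemma sum_sq_div_sub_sub_sum_sq_div_sub {x y : ℝ} (hx : ∀ n, x ≠ σ n) (hy : ∀ n, y ≠ σ n) :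
    ∑ n ∈ s, d n ^ 2 / (x - σ n) - ∑ n ∈ s, d n ^ 2 / (y - σ n) =
      (y - x) * ∑ n ∈ s, d n / (x - σ n) * (d n / (y - σ n)) := by
  rw [mul_sum, ← sum_sub_distrib]
  refine sum_congr rfl fun n _ => ?_
  have hxn : x - σ n ≠ 0 := sub_ne_zero.mpr (hx n)
  have hyn : y - σ n ≠ 0 := sub_ne_zero.mpr (hy n)
  field_simp
  ring

theorem cqp_objective_monotone_in_multiplier_general
    {N : ℕ} (σ dbar : Fin N → ℝ) (lam lam' : ℝ)
    (hlt : lam' < lam)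
    (hlam : ∀ n, lam ≠ σ n) (hlam' : ∀ n, lam' ≠ σ n)
    (hg : ∑ n, dbar n ^ 2 / (σ n - lam) ^ 2 = 1)
    (hg' : ∑ n, dbar n ^ 2 / (σ n - lam') ^ 2 = 1) :
    (∑ n, dbar n ^ 2 / (lam' - σ n)) + lam' ≤
      (∑ n, dbar n ^ 2 / (lam - σ n)) + lam := by
  rw [sum_sq_div_sq_sub_eq_sum_sq] at hg hg'
  have hinner : ∑ n, dbar n / (lam - σ n) * (dbar n / (lam' - σ n)) ≤ 1 := by
    simpa [hg, hg'] using Real.sum_mul_le_sqrt_mul_sqrt univ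
      (fun n => dbar n / (lam - σ n)) (fun n => dbar n / (lam' - σ n))
  have hdiff := sum_sq_div_sub_sub_sum_sq_div_sub univ dbar σ hlam hlam'
  nlinarith [mul_nonneg (sub_nonneg.mpr hlt.le) (sub_nonneg.mpr hinner)]

/-- **Monotonicity of the objective along KKT multipliers (Theorem 4.1, third bullet).**
For `g(λ) = ∑ d̄ₙ²/(σₙ − λ)²` and `ξ̃(λ) = ∑ d̄ₙ²/(λ − σₙ) + λ`, if `λ > λ'`, neither is an
eigenvalue `σₙ`, and `g(λ) = g(λ') = 1`, then `ξ̃(λ') ≤ ξ̃(λ)`. -/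
theorem cqp_objective_monotone_in_multiplier
    {N : ℕ} (hN : 1 ≤ N) (σ dbar : Fin N → ℝ) (lam lam' : ℝ)
    (hlt : lam' < lam)
    (hlam : ∀ n, lam ≠ σ n) (hlam' : ∀ n, lam' ≠ σ n)
    (hg : ∑ n, dbar n ^ 2 / (σ n - lam) ^ 2 = 1)
    (hg' : ∑ n, dbar n ^ 2 / (σ n - lam') ^ 2 = 1) :
    (∑ n, dbar n ^ 2 / (lam' - σ n)) + lam' ≤
      (∑ n, dbar n ^ 2 / (lam - σ n)) + lam :=
  cqp_objective_monotone_in_multiplier_general σ dbar lam lam' hlt hlam hlam' hg hg'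
end

section
/- Let N ≥ 1, σ ∈ ℝ^N, and d̄ ∈ ℝ^N with d̄_n ≠ 0 for all n, and define g(λ) := ∑_{n=1}^N d̄_n²/(σ_n − λ)². Set λ* := max_{1 ≤ ℓ ≤ N} (σ_ℓ + |d̄_ℓ|). Then there exists λ ≥ λ* with g(λ) = 1; that is, the largest solution λ₁ of the secular equation g(λ) = 1 satisfies λ₁ ≥ max_ℓ (σ_ℓ + |d̄_ℓ|). -/
/-!
At `λ* = σ_ℓ + |d̄_ℓ|` for a maximizing index `ℓ` the `ℓ`-th term of the secular function
is already `1`, so `g(λ*) ≥ 1`. Since every `σ_n < λ*` (because `d̄_n ≠ 0`), `g` is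
continuous on `[λ*, ∞)`, and it tends to `0` at infinity; the intermediate value theorem
gives a root of `g = 1` in `[λ*, ∞)`.
-/

open Filter Set Topology

noncomputable def secularFunction {ι : Type*} [Fintype ι] (σ d : ι → ℝ) (lam : ℝ) : ℝ :=
  ∑ n, d n ^ 2 / (σ n - lam) ^ 2

namespace secularFunction

variable {ι : Type*} [Fintype ι] (σ d : ι → ℝ)

theorem continuousOn_Ici {a : ℝ} (ha : ∀ n, σ n < a) :
    ContinuousOn (secularFunction σ d) (Ici a) :=
  continuousOn_finsetSum _ fun n _ =>
    continuousOn_const.div (by fun_prop) fun _ hx =>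
      pow_ne_zero 2 (sub_ne_zero.mpr ((ha n).trans_le hx).ne)

theorem tendsto_atTop_zero : Tendsto (secularFunction σ d) atTop (𝓝 0) := by
  have hterm : ∀ n, Tendsto (fun lam => d n ^ 2 / (σ n - lam) ^ 2) atTop (𝓝 0) := fun n =>
    tendsto_const_nhds.div_atTop <|
      ((tendsto_pow_atTop two_ne_zero).comp
        (tendsto_atTop_add_const_right _ (-σ n) tendsto_id)).congr
          fun _ => by simp only [Function.comp_apply, id]; ring
  have := tendsto_finsetSum Finset.univ fun n _ => hterm n
  rwa [Finset.sum_const_zero] at this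

theorem one_le_apply_add_abs {ℓ : ι} (hℓ : d ℓ ≠ 0) :
    1 ≤ secularFunction σ d (σ ℓ + |d ℓ|) :=
  calc (1 : ℝ) = d ℓ ^ 2 / (σ ℓ - (σ ℓ + |d ℓ|)) ^ 2 := by
        rw [sub_add_cancel_left, neg_sq, sq_abs, div_self (pow_ne_zero 2 hℓ)]
    _ ≤ secularFunction σ d (σ ℓ + |d ℓ|) :=
        Finset.single_le_sum (f := fun n => d n ^ 2 / (σ n - (σ ℓ + |d ℓ|)) ^ 2)
          (fun _ _ => by positivity) (Finset.mem_univ ℓ)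

end secularFunction

/-- **Localization of the largest root (second bullet of Theorem 4.1).** If `d̄ₙ ≠ 0` for all
`n`, then the secular equation `g(λ) = ∑ d̄ₙ²/(σₙ − λ)² = 1` has a solution
`λ ≥ λ* = maxₗ (σₗ + |d̄ₗ|)`. -/
theorem secular_equation_largest_root_lower_bound
    {N : ℕ} (hN : 1 ≤ N) (σ dbar : Fin N → ℝ) (hd : ∀ n, dbar n ≠ 0) :
    ∃ lam : ℝ,
      (Finset.univ.sup' (Finset.univ_nonempty_iff.mpr (Fin.pos_iff_nonempty.mp hN))
          fun ℓ => σ ℓ + |dbar ℓ|) ≤ lam ∧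
      ∑ n, dbar n ^ 2 / (σ n - lam) ^ 2 = 1 := by
  set lamStar := Finset.univ.sup' (Finset.univ_nonempty_iff.mpr (Fin.pos_iff_nonempty.mp hN))
    fun ℓ => σ ℓ + |dbar ℓ|
  have hσ : ∀ n, σ n < lamStar := fun n =>
    (lt_add_of_pos_right _ (abs_pos.mpr (hd n))).trans_le
      (Finset.le_sup' (fun ℓ => σ ℓ + |dbar ℓ|) (Finset.mem_univ n))
  obtain ⟨ℓ, -, hℓ⟩ : ∃ ℓ ∈ Finset.univ, lamStar = σ ℓ + |dbar ℓ| :=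
    Finset.exists_mem_eq_sup' _ _
  have hone : 1 ∈ Ioc 0 (secularFunction σ dbar lamStar) :=
    ⟨one_pos, hℓ ▸ secularFunction.one_le_apply_add_abs σ dbar (hd ℓ)⟩
  exact isPreconnected_Ici.intermediate_value_Ioc self_mem_Ici
    (le_principal_iff.mpr (Ici_mem_atTop lamStar))
    (secularFunction.continuousOn_Ici σ dbar hσ) (secularFunction.tendsto_atTop_zero σ dbar) hone
end
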